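/- arXiv:1602.06473 — 6 statements merged into one kernel-verified Lean document; each statement's English description precedes it below -/
import Mathlib

section
/- For any real number t ≥ 2, the sum over positive integers n ≤ t of n/φ(n)² is O(log t), where φ is the Euler totient function. -/
open Finset

/-- weight of squarefree kernel -/
noncomputable def cc (d : ℕ) : ℝ :=
  if Squarefree d then ∏ p ∈ d.primeFactors, (3 / ((p : ℝ) - 1)) else 0

lemma one_le_sub_one_of_prime {p : ℕ} (hp : p.Prime) : (1:ℝ) ≤ (p:ℝ) - 1 := by
  have : (2:ℝ) ≤ (p:ℝ) := by exact_mod_cast hp.two_le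
  linarith

lemma cc_nonneg (d : ℕ) : 0 ≤ cc d := by
  unfold cc
  split
  · exact Finset.prod_nonneg fun p hp => by
      have := one_le_sub_one_of_prime (Nat.prime_of_mem_primeFactors hp)
      positivity
  · exact le_refl 0

lemma squarefree_prod_primes {A : Finset ℕ} (hA : ∀ p ∈ A, p.Prime) :
    Squarefree (∏ p ∈ A, p) := by
  classical
  induction A using Finset.induction with
  | empty => simpa using squarefree_one
  | @insert a s hx ih =>
    rw [Finset.prod_insert hx]
    have ha : a.Prime := hA a (Finset.mem_insert_self a s)
    have hcop : Nat.Coprime a (∏ p ∈ s, p) := by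
      apply Nat.Coprime.prod_right
      intro q hq
      exact (Nat.coprime_primes ha (hA q (Finset.mem_insert_of_mem hq))).mpr
        (by rintro rfl; exact hx hq)
    rw [Nat.squarefree_mul hcop]
    exact ⟨ha.squarefree, ih fun p hp => hA p (Finset.mem_insert_of_mem hp)⟩

lemma cc_prod_primes {A : Finset ℕ} (hA : ∀ p ∈ A, p.Prime) :
    cc (∏ p ∈ A, p) = ∏ p ∈ A, (3 / ((p : ℝ) - 1)) := by
  rw [cc, if_pos (squarefree_prod_primes hA), Nat.primeFactors_prod hA]

/-- main pointwise bound -/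
lemma point_bound {n : ℕ} (hn : n ≠ 0) :
    (n : ℝ) / (Nat.totient n : ℝ) ^ 2 ≤ (∑ d ∈ n.divisors, cc d) * ((n : ℝ))⁻¹ := by
  have hn0 : (0:ℝ) < n := by exact_mod_cast Nat.pos_of_ne_zero hn
  have hφ : (0:ℝ) < (Nat.totient n : ℝ) := by
    exact_mod_cast Nat.totient_pos.mpr (Nat.pos_of_ne_zero hn)
  -- step 1 : n/φ(n)^2 = (n/φ n)^2 / n
  have h1 : (n : ℝ) / (Nat.totient n : ℝ) ^ 2 = ((n:ℝ) / (Nat.totient n : ℝ))^2 * ((n:ℝ))⁻¹ := by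
    field_simp
  rw [h1]
  -- step 2 : n/φ n = ∏ p/(p-1)
  have htot : (Nat.totient n : ℝ) = (n:ℝ) * ∏ p ∈ n.primeFactors, (1 - (p:ℝ)⁻¹) := by
    have h := congrArg (fun q : ℚ => (q : ℝ)) (Nat.totient_eq_mul_prod_factors n)
    push_cast at h
    exact h
  have hfacpos : ∀ p ∈ n.primeFactors, (0:ℝ) < 1 - (p:ℝ)⁻¹ := by
    intro p hp
    have h2 : (2:ℝ) ≤ (p:ℝ) := by exact_mod_cast (Nat.prime_of_mem_primeFactors hp).two_le
    have hp0 : (0:ℝ) < (p:ℝ) := by linarith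
    have : (p:ℝ)⁻¹ ≤ 2⁻¹ := by
      apply inv_anti₀ <;> norm_num [h2]
    norm_num at this ⊢
    linarith
  have hP : (0:ℝ) < ∏ p ∈ n.primeFactors, (1 - (p:ℝ)⁻¹) := Finset.prod_pos hfacpos
  have h2 : (n:ℝ) / (Nat.totient n : ℝ) = ∏ p ∈ n.primeFactors, ((p:ℝ) / ((p:ℝ) - 1)) := by
    rw [htot, div_mul_cancel_left₀ (ne_of_gt hn0), ← Finset.prod_inv_distrib]
    apply Finset.prod_congr rfl
    intro p hp
    have h2 : (2:ℝ) ≤ (p:ℝ) := by exact_mod_cast (Nat.prime_of_mem_primeFactors hp).two_le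
    have hp0 : (p:ℝ) ≠ 0 := by linarith
    have hp1 : (p:ℝ) - 1 ≠ 0 := by linarith
    field_simp
  rw [h2]
  -- step 3 : (∏ p/(p-1))^2 ≤ ∏ (1 + 3/(p-1))
  have h3 : (∏ p ∈ n.primeFactors, ((p:ℝ) / ((p:ℝ) - 1)))^2
      ≤ ∏ p ∈ n.primeFactors, (1 + 3 / ((p:ℝ) - 1)) := by
    rw [← Finset.prod_pow]
    apply Finset.prod_le_prod
    · intro p hp
      have := one_le_sub_one_of_prime (Nat.prime_of_mem_primeFactors hp)
      positivity
    · intro p hp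
      have h2 : (2:ℝ) ≤ (p:ℝ) := by exact_mod_cast (Nat.prime_of_mem_primeFactors hp).two_le
      have hpos : (0:ℝ) < ((p:ℝ) - 1)^2 := by nlinarith
      rw [div_pow, div_le_iff₀ hpos]
      have h1p : ((p:ℝ) - 1) ≠ 0 := by nlinarith
      have hexp : (1 + 3 / ((p:ℝ) - 1)) * ((p:ℝ)-1)^2 = ((p:ℝ)-1)^2 + 3*((p:ℝ)-1) := by
        field_simp
      rw [hexp]
      nlinarith
  -- step 4 : expand the product as a sum over squarefree divisors
  have h4 : ∏ p ∈ n.primeFactors, (1 + 3 / ((p:ℝ) - 1))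
      = ∑ d ∈ n.divisors with Squarefree d, cc d := by
    rw [Nat.sum_divisors_filter_squarefree hn]
    have hps : (UniqueFactorizationMonoid.normalizedFactors n).toFinset = n.primeFactors := by
      simp [Nat.factors_eq]
    rw [hps]
    calc ∏ p ∈ n.primeFactors, (1 + 3 / ((p:ℝ) - 1))
        = ∏ p ∈ n.primeFactors, (3 / ((p:ℝ) - 1) + 1) := by
          apply Finset.prod_congr rfl; intros; ring
      _ = ∑ A ∈ n.primeFactors.powerset,
            (∏ p ∈ A, (3 / ((p:ℝ) - 1))) * ∏ p ∈ n.primeFactors \ A, (1:ℝ) :=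
          Finset.prod_add _ _ _
      _ = ∑ A ∈ n.primeFactors.powerset, cc A.val.prod := by
          apply Finset.sum_congr rfl
          intro A hA
          have hA' : ∀ p ∈ A, p.Prime := fun p hp =>
            Nat.prime_of_mem_primeFactors (Finset.mem_powerset.mp hA hp)
          rw [Finset.prod_const_one, mul_one, Finset.prod_val, Function.id_def,
            cc_prod_primes hA']
  have h5 : ∑ d ∈ n.divisors with Squarefree d, cc d ≤ ∑ d ∈ n.divisors, cc d :=
    Finset.sum_le_sum_of_subset_of_nonneg (Finset.filter_subset _ _)
      (fun d _ _ => cc_nonneg d)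
  have hnn : (0:ℝ) ≤ ((n:ℝ))⁻¹ := by positivity
  exact mul_le_mul_of_nonneg_right (h3.trans (le_of_eq h4) |>.trans h5) hnn

noncomputable def KK : ℝ := 25 * ∑' d : ℕ, ((d:ℝ) ^ (3/2 : ℝ))⁻¹

lemma summable_aux : Summable (fun d : ℕ => ((d:ℝ) ^ (3/2 : ℝ))⁻¹) :=
  Real.summable_nat_rpow_inv.mpr (by norm_num)

lemma KK_nonneg : 0 ≤ KK := by
  unfold KK
  have : 0 ≤ ∑' d : ℕ, ((d:ℝ) ^ (3/2:ℝ))⁻¹ := tsum_nonneg fun d => by positivity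
  linarith

lemma prod_primes_bound {F : Finset ℕ} (hF : ∀ p ∈ F, p.Prime) :
    ∏ p ∈ F, (9 * (p:ℝ) / ((p:ℝ) - 1)^2) ≤ 625 := by
  classical
  rw [← Finset.prod_filter_mul_prod_filter_not F (fun p => p ≤ 7)
      (fun p => 9 * (p:ℝ) / ((p:ℝ) - 1)^2)]
  have h1 : ∏ p ∈ F.filter (fun p => ¬ p ≤ 7), (9 * (p:ℝ) / ((p:ℝ)-1)^2) ≤ 1 := by
    apply Finset.prod_le_one
    · intro p hp
      have := one_le_sub_one_of_prime (hF p (Finset.mem_filter.mp hp).1)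
      positivity
    · intro p hp
      obtain ⟨hpF, hp7⟩ := Finset.mem_filter.mp hp
      have hpp := hF p hpF
      have h11 : 11 ≤ p := by
        by_contra h
        push_neg at h hp7
        interval_cases p <;> revert hpp <;> norm_num
      have h11' : (11:ℝ) ≤ (p:ℝ) := by exact_mod_cast h11
      rw [div_le_one (by nlinarith)]
      nlinarith
  have h1nn : 0 ≤ ∏ p ∈ F.filter (fun p => ¬ p ≤ 7), (9 * (p:ℝ) / ((p:ℝ)-1)^2) := by
    apply Finset.prod_nonneg
    intro p hp
    have := one_le_sub_one_of_prime (hF p (Finset.mem_filter.mp hp).1)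
    positivity
  have hTsub : F.filter (fun p => p ≤ 7) ⊆ ({2,3,5,7} : Finset ℕ) := by
    intro p hp
    obtain ⟨hpF, hp7⟩ := Finset.mem_filter.mp hp
    have hpp := hF p hpF
    have h2le := hpp.two_le
    interval_cases p <;> revert hpp <;> norm_num
  have hTnn : 0 ≤ ∏ p ∈ F.filter (fun p => p ≤ 7), (9 * (p:ℝ) / ((p:ℝ)-1)^2) := by
    apply Finset.prod_nonneg
    intro p hp
    have := one_le_sub_one_of_prime (hF p (Finset.mem_filter.mp hp).1)
    positivity
  have h2 : ∏ p ∈ F.filter (fun p => p ≤ 7), (9 * (p:ℝ) / ((p:ℝ)-1)^2)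
      ≤ ∏ p ∈ ({2,3,5,7} : Finset ℕ), (9 * (p:ℝ) / ((p:ℝ)-1)^2) := by
    rw [← Finset.prod_sdiff hTsub]
    have hone : (1:ℝ) ≤ ∏ p ∈ ({2,3,5,7} : Finset ℕ) \ F.filter (fun p => p ≤ 7),
        (9 * (p:ℝ) / ((p:ℝ)-1)^2) := by
      calc (1:ℝ) = ∏ _p ∈ ({2,3,5,7} : Finset ℕ) \ F.filter (fun p => p ≤ 7), (1:ℝ) := by
            rw [Finset.prod_const_one]
        _ ≤ ∏ p ∈ ({2,3,5,7} : Finset ℕ) \ F.filter (fun p => p ≤ 7),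
              (9 * (p:ℝ) / ((p:ℝ)-1)^2) := by
            apply Finset.prod_le_prod (fun i _ => zero_le_one)
            intro p hp
            have hp' := (Finset.mem_sdiff.mp hp).1
            fin_cases hp' <;> norm_num
    exact le_mul_of_one_le_left hTnn hone
  have h3 : ∏ p ∈ ({2,3,5,7} : Finset ℕ), (9 * (p:ℝ) / ((p:ℝ)-1)^2) ≤ 625 := by
    norm_num [Finset.prod_insert, Finset.mem_insert]
  have hRnn : 0 ≤ ∏ p ∈ ({2,3,5,7} : Finset ℕ), (9 * (p:ℝ) / ((p:ℝ)-1)^2) := by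
    apply Finset.prod_nonneg
    intro p hp
    fin_cases hp <;> norm_num
  have hfin := mul_le_mul h2 h1 h1nn hRnn
  rw [mul_one] at hfin
  exact hfin.trans h3

lemma cc_div_le {d : ℕ} (hd : 1 ≤ d) : cc d / d ≤ 25 * ((d:ℝ) ^ (3/2:ℝ))⁻¹ := by
  have hd0 : (0:ℝ) < d := by exact_mod_cast hd
  by_cases hsq : Squarefree d
  · have hF : ∀ p ∈ d.primeFactors, p.Prime := fun p hp => Nat.prime_of_mem_primeFactors hp
    have hccd : cc d = ∏ p ∈ d.primeFactors, (3/((p:ℝ)-1)) := if_pos hsq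
    have hcnn : 0 ≤ cc d := cc_nonneg d
    have hprod : (d:ℝ) = ∏ p ∈ d.primeFactors, (p:ℝ) := by
      rw [← Nat.cast_prod, Nat.prod_primeFactors_of_squarefree hsq]
    have key : (cc d)^2 * (d:ℝ) ≤ 625 := by
      rw [hccd, hprod, ← Finset.prod_pow, ← Finset.prod_mul_distrib]
      calc ∏ p ∈ d.primeFactors, ((3/((p:ℝ)-1))^2 * (p:ℝ))
          = ∏ p ∈ d.primeFactors, (9 * (p:ℝ) / ((p:ℝ)-1)^2) := by
            apply Finset.prod_congr rfl
            intro p hp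
            rw [div_pow, div_mul_eq_mul_div]
            norm_num
        _ ≤ 625 := prod_primes_bound hF
    have hrw : ((d:ℝ) ^ (3/2:ℝ)) ^ (2:ℕ) = (d:ℝ)^(3:ℕ) := by
      rw [← Real.rpow_natCast ((d:ℝ)^(3/2:ℝ)) 2, ← Real.rpow_mul hd0.le,
        ← Real.rpow_natCast (d:ℝ) 3]
      norm_num
    have hb : (0:ℝ) ≤ 25 * ((d:ℝ) ^ (3/2:ℝ))⁻¹ := by positivity
    apply le_of_pow_le_pow_left₀ two_ne_zero hb
    have ha2 : (cc d / d)^(2:ℕ) = ((cc d)^2 * (d:ℝ)) / (d:ℝ)^(3:ℕ) := by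
      field_simp
    have hb2 : (25 * ((d:ℝ)^(3/2:ℝ))⁻¹)^(2:ℕ) = 625 / (d:ℝ)^(3:ℕ) := by
      rw [mul_pow, inv_pow, hrw, div_eq_mul_inv]
      norm_num
    rw [ha2, hb2]
    gcongr
  · have : cc d = 0 := if_neg hsq
    rw [this]
    rw [zero_div]
    positivity

lemma swap_bound (N : ℕ) :
    ∑ n ∈ Finset.Icc 1 N, (∑ d ∈ n.divisors, cc d) * ((n:ℝ))⁻¹
      ≤ (∑ d ∈ Finset.Icc 1 N, cc d / d) * (∑ m ∈ Finset.Icc 1 N, ((m:ℝ))⁻¹) := by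
  classical
  have hstep : ∀ n ∈ Finset.Icc 1 N,
      (∑ d ∈ n.divisors, cc d) * ((n:ℝ))⁻¹
        = ∑ x ∈ n.divisorsAntidiagonal, cc x.1 * (((x.1:ℝ)) * (x.2:ℝ))⁻¹ := by
    intro n hn
    rw [Finset.sum_mul, Nat.sum_divisorsAntidiagonal (fun d m => cc d * (((d:ℝ))*(m:ℝ))⁻¹)]
    apply Finset.sum_congr rfl
    intro d hd
    have hdvd : d ∣ n := (Nat.mem_divisors.mp hd).1
    have hmul : (d:ℝ) * ((n/d : ℕ):ℝ) = (n:ℝ) := by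
      rw [← Nat.cast_mul, Nat.mul_div_cancel' hdvd]
    rw [hmul]
  rw [Finset.sum_congr rfl hstep,
    ← Finset.sum_sigma (Finset.Icc 1 N) (fun n => n.divisorsAntidiagonal)
      (fun x => cc x.2.1 * (((x.2.1:ℝ))*(x.2.2:ℝ))⁻¹)]
  set S := (Finset.Icc 1 N).sigma (fun n => n.divisorsAntidiagonal) with hS
  have hinj : ∀ x ∈ S, ∀ y ∈ S, x.2 = y.2 → x = y := by
    intro x hx y hy hxy
    obtain ⟨hx1, hx2⟩ := Finset.mem_sigma.mp hx
    obtain ⟨hy1, hy2⟩ := Finset.mem_sigma.mp hy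
    have hx3 := (Nat.mem_divisorsAntidiagonal.mp hx2).1
    have hy3 := (Nat.mem_divisorsAntidiagonal.mp hy2).1
    have h1 : x.1 = y.1 := by rw [← hx3, ← hy3, hxy]
    exact Sigma.ext h1 (heq_of_eq hxy)
  have himg : ∑ x ∈ S, cc x.2.1 * (((x.2.1:ℝ))*(x.2.2:ℝ))⁻¹
      = ∑ y ∈ S.image Sigma.snd, cc y.1 * (((y.1:ℝ))*(y.2:ℝ))⁻¹ :=
    (Finset.sum_image (f := fun y : ℕ × ℕ => cc y.1 * (((y.1:ℝ))*(y.2:ℝ))⁻¹) hinj).symm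
  rw [himg]
  have hsub : S.image Sigma.snd ⊆ Finset.Icc 1 N ×ˢ Finset.Icc 1 N := by
    intro y hy
    obtain ⟨x, hxS, rfl⟩ := Finset.mem_image.mp hy
    obtain ⟨hx1, hx2⟩ := Finset.mem_sigma.mp hxS
    obtain ⟨heq, hne⟩ := Nat.mem_divisorsAntidiagonal.mp hx2
    obtain ⟨h1, h2⟩ := Finset.mem_Icc.mp hx1
    rw [Finset.mem_product, Finset.mem_Icc, Finset.mem_Icc]
    have ha0 : x.2.1 ≠ 0 := by intro h0; rw [h0, zero_mul] at heq; omega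
    have hb0 : x.2.2 ≠ 0 := by intro h0; rw [h0, mul_zero] at heq; omega
    have haN : x.2.1 ≤ x.1 := Nat.le_of_dvd (by omega) ⟨x.2.2, heq.symm⟩
    have hbN : x.2.2 ≤ x.1 := Nat.le_of_dvd (by omega) ⟨x.2.1, by rw [mul_comm]; exact heq.symm⟩
    omega
  calc ∑ y ∈ S.image Sigma.snd, cc y.1 * (((y.1:ℝ))*(y.2:ℝ))⁻¹
      ≤ ∑ y ∈ Finset.Icc 1 N ×ˢ Finset.Icc 1 N, cc y.1 * (((y.1:ℝ))*(y.2:ℝ))⁻¹ := by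
        apply Finset.sum_le_sum_of_subset_of_nonneg hsub
        intro y _ _
        have h1 : (0:ℝ) ≤ ((y.1:ℝ)*(y.2:ℝ))⁻¹ := by positivity
        exact mul_nonneg (cc_nonneg _) h1
    _ = (∑ d ∈ Finset.Icc 1 N, cc d / d) * (∑ m ∈ Finset.Icc 1 N, ((m:ℝ))⁻¹) := by
        rw [Finset.sum_product, Finset.sum_mul_sum]
        apply Finset.sum_congr rfl
        intro d _
        apply Finset.sum_congr rfl
        intro m _
        rw [mul_inv, div_eq_mul_inv]
        ring

/-- For any real `t ≥ 2`, `∑_{n ≤ t} n / φ(n)² = O(log t)` with an absolute constant. -/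
theorem sum_div_totient_sq_le :
    ∃ C : ℝ, 0 < C ∧ ∀ t : ℝ, 2 ≤ t →
      ∑ n ∈ Finset.Icc 1 ⌊t⌋₊, (n : ℝ) / (Nat.totient n : ℝ) ^ 2 ≤ C * Real.log t := by
  have hlog2 : 0 < Real.log 2 := Real.log_pos (by norm_num)
  refine ⟨(KK + 1) * (1 / Real.log 2 + 1), ?_, ?_⟩
  · have := KK_nonneg
    positivity
  · intro t ht
    set N := ⌊t⌋₊ with hNdef
    have hN2 : 2 ≤ N := Nat.le_floor (by exact_mod_cast ht)
    have ht0 : (0:ℝ) < t := by linarith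
    have hNt : (N:ℝ) ≤ t := Nat.floor_le ht0.le
    have hlogt : Real.log 2 ≤ Real.log t := Real.log_le_log (by norm_num) ht
    have hlogt0 : 0 < Real.log t := lt_of_lt_of_le hlog2 hlogt
    have step1 : ∑ n ∈ Finset.Icc 1 N, (n:ℝ)/(Nat.totient n:ℝ)^2
        ≤ ∑ n ∈ Finset.Icc 1 N, (∑ d ∈ n.divisors, cc d) * ((n:ℝ))⁻¹ := by
      apply Finset.sum_le_sum
      intro n hn
      have h1 := (Finset.mem_Icc.mp hn).1
      exact point_bound (by omega)
    have step2 := swap_bound N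
    have f1 : ∑ d ∈ Finset.Icc 1 N, cc d / d ≤ KK := by
      calc ∑ d ∈ Finset.Icc 1 N, cc d / d
          ≤ ∑ d ∈ Finset.Icc 1 N, 25 * ((d:ℝ)^(3/2:ℝ))⁻¹ := by
            apply Finset.sum_le_sum
            intro d hd
            exact cc_div_le (Finset.mem_Icc.mp hd).1
        _ = 25 * ∑ d ∈ Finset.Icc 1 N, ((d:ℝ)^(3/2:ℝ))⁻¹ := by rw [Finset.mul_sum]
        _ ≤ KK := by
            unfold KK
            have h := Summable.sum_le_tsum (Finset.Icc 1 N) (fun d _ => by positivity) summable_aux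
            linarith
    have f1nn : 0 ≤ ∑ d ∈ Finset.Icc 1 N, cc d / d := by
      apply Finset.sum_nonneg
      intro d hd
      have h1 : (1:ℕ) ≤ d := (Finset.mem_Icc.mp hd).1
      have h0 : (0:ℝ) < (d:ℝ) := by exact_mod_cast h1
      exact div_nonneg (cc_nonneg d) h0.le
    have f2nn : 0 ≤ ∑ m ∈ Finset.Icc 1 N, ((m:ℝ))⁻¹ := by
      apply Finset.sum_nonneg
      intro m _
      positivity
    have f2 : ∑ m ∈ Finset.Icc 1 N, ((m:ℝ))⁻¹ ≤ 1 + Real.log t := by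
      have hh : ((harmonic N : ℚ):ℝ) = ∑ m ∈ Finset.Icc 1 N, ((m:ℝ))⁻¹ := by
        rw [harmonic_eq_sum_Icc]
        push_cast
        rfl
      have h1 := harmonic_le_one_add_log N
      rw [hh] at h1
      have h2 : Real.log (N:ℝ) ≤ Real.log t := Real.log_le_log (by exact_mod_cast Nat.lt_of_lt_of_le Nat.zero_lt_two hN2) hNt
      linarith
    have h1 : (1:ℝ) ≤ 1 / Real.log 2 * Real.log t := by
      rw [div_mul_eq_mul_div, one_mul, le_div_iff₀ hlog2, one_mul]
      exact hlogt
    calc ∑ n ∈ Finset.Icc 1 N, (n:ℝ)/(Nat.totient n:ℝ)^2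
        ≤ (∑ d ∈ Finset.Icc 1 N, cc d / d) * (∑ m ∈ Finset.Icc 1 N, ((m:ℝ))⁻¹) :=
          step1.trans step2
      _ ≤ KK * (1 + Real.log t) := mul_le_mul f1 f2 f2nn KK_nonneg
      _ ≤ (KK + 1) * ((1 / Real.log 2 + 1) * Real.log t) := by
          nlinarith [mul_nonneg KK_nonneg (sub_nonneg.mpr h1), KK_nonneg, hlogt0]
      _ = (KK + 1) * (1 / Real.log 2 + 1) * Real.log t := by ring
end

section
/- For any real number t ≥ 2, the sum over positive integers n ≤ t of n²/φ(n)² is O(t), where φ is the Euler totient function. -/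
open Finset

private lemma sum_inv_sq_le (N : ℕ) : ∑ k ∈ Icc 2 N, (1 / (k:ℝ)^2) ≤ 1 := by
  have key : ∀ N : ℕ, 1 ≤ N → ∑ k ∈ Icc 2 N, (1 / (k:ℝ)^2) ≤ 1 - 1/(N:ℝ) := by
    intro N hN
    induction N with
    | zero => omega
    | succ n ih =>
      rcases Nat.lt_or_ge n 1 with h | h
      · interval_cases n
        · simp
      · have h2 : 2 ≤ n + 1 := by omega
        rw [Finset.sum_Icc_succ_top h2]
        have hn : (1:ℝ) ≤ (n:ℝ) := by exact_mod_cast h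
        have := ih h
        have hpos : (0:ℝ) < (n:ℝ) := by linarith
        have hpos1 : (0:ℝ) < (n:ℝ) + 1 := by linarith
        push_cast
        have e : 1/((n:ℝ)+1)^2 ≤ 1/(n:ℝ) - 1/((n:ℝ)+1) := by
          rw [div_sub_div _ _ (ne_of_gt hpos) (ne_of_gt hpos1)]
          rw [div_le_div_iff₀ (by positivity) (by positivity)]
          nlinarith
        linarith
  rcases Nat.lt_or_ge N 1 with h | h
  · interval_cases N <;> simp
  · have := key N h
    have : (0:ℝ) < (N:ℝ) := by exact_mod_cast h
    have := key N h
    have h1 : 1/(N:ℝ) ≥ 0 := by positivity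
    linarith

private lemma totient_ratio_sq (n : ℕ) (hn : n ≠ 0) :
    (n : ℝ) ^ 2 / (Nat.totient n : ℝ) ^ 2 ≤ ∏ p ∈ n.primeFactors, (1 + 6/(p:ℝ)) := by
  have hφ : 0 < Nat.totient n := Nat.totient_pos.mpr (Nat.pos_of_ne_zero hn)
  have key := Nat.totient_mul_prod_primeFactors n
  have keyR : (Nat.totient n : ℝ) * ∏ p ∈ n.primeFactors, (p:ℝ)
      = (n:ℝ) * ∏ p ∈ n.primeFactors, ((p:ℝ) - 1) := by
    have := congrArg (Nat.cast : ℕ → ℝ) key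
    push_cast at this
    rw [this]
    congr 1
    refine Finset.prod_congr rfl fun p hp => ?_
    have : 1 ≤ p := (Nat.prime_of_mem_primeFactors hp).one_lt.le
    push_cast [Nat.cast_sub this]
    ring_nf
  have hratio : (n:ℝ) / (Nat.totient n : ℝ)
      = ∏ p ∈ n.primeFactors, ((p:ℝ) / ((p:ℝ) - 1)) := by
    rw [Finset.prod_div_distrib]
    have hden : ∏ p ∈ n.primeFactors, ((p:ℝ) - 1) ≠ 0 := by
      apply Finset.prod_ne_zero_iff.mpr
      intro p hp
      have : 2 ≤ p := (Nat.prime_of_mem_primeFactors hp).two_le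
      have : (2:ℝ) ≤ (p:ℝ) := by exact_mod_cast this
      linarith
    have hφ' : (Nat.totient n : ℝ) ≠ 0 := by positivity
    field_simp
    linarith [keyR]
  have h2 : (n : ℝ) ^ 2 / (Nat.totient n : ℝ) ^ 2
      = ∏ p ∈ n.primeFactors, ((p:ℝ) / ((p:ℝ) - 1))^2 := by
    rw [← div_pow, hratio, ← Finset.prod_pow]
  rw [h2]
  apply Finset.prod_le_prod
  · intro p hp; positivity
  · intro p hp
    have hp2 : 2 ≤ p := (Nat.prime_of_mem_primeFactors hp).two_le
    have hp2' : (2:ℝ) ≤ (p:ℝ) := by exact_mod_cast hp2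
    rw [div_pow, div_le_iff₀ (by nlinarith)]
    have hppos : (0:ℝ) < (p:ℝ) := by linarith
    have : (1 + 6/(p:ℝ)) * ((p:ℝ)-1)^2 = ((p:ℝ)^3 + 4*(p:ℝ)^2 - 11*(p:ℝ) + 6)/(p:ℝ) := by
      field_simp; ring
    rw [this, le_div_iff₀ hppos]
    nlinarith

/-- For any real `t ≥ 2`, `∑_{n ≤ t} n² / φ(n)² = O(t)` with an absolute constant. -/
theorem sum_sq_div_totient_sq_le :
    ∃ C : ℝ, 0 < C ∧ ∀ t : ℝ, 2 ≤ t →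
      ∑ n ∈ Finset.Icc 1 ⌊t⌋₊, (n : ℝ) ^ 2 / (Nat.totient n : ℝ) ^ 2 ≤ C * t := by
  refine ⟨Real.exp 12, Real.exp_pos 12, fun t ht => ?_⟩
  set N := ⌊t⌋₊ with hN
  have htpos : (0:ℝ) ≤ t := by linarith
  have hNt : (N:ℝ) ≤ t := Nat.floor_le htpos
  set P := Nat.primesBelow (N+1) with hP
  -- Step 1: pointwise bound and expansion
  have step1 : ∑ n ∈ Icc 1 N, (n : ℝ) ^ 2 / (Nat.totient n : ℝ) ^ 2
      ≤ ∑ n ∈ Icc 1 N, ∑ T ∈ P.powerset,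
          (if (∏ p ∈ T, p) ∣ n then ∏ p ∈ T, (6/(p:ℝ)) else 0) := by
    apply Finset.sum_le_sum
    intro n hn
    have hn1 : 1 ≤ n := (Finset.mem_Icc.mp hn).1
    have hnN : n ≤ N := (Finset.mem_Icc.mp hn).2
    have hne : n ≠ 0 := by omega
    refine le_trans (totient_ratio_sq n hne) ?_
    have expand : ∏ p ∈ n.primeFactors, (1 + 6/(p:ℝ))
        = ∑ T ∈ n.primeFactors.powerset, ∏ p ∈ T, (6/(p:ℝ)) := by
      have := Finset.prod_add (fun p : ℕ => 6/(p:ℝ)) (fun _ => 1) n.primeFactors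
      simp only [Finset.prod_const_one, mul_one] at this
      rw [← this]
      exact Finset.prod_congr rfl fun p _ => by ring
    rw [expand]
    have hsub : n.primeFactors ⊆ P := by
      intro p hp
      refine Nat.mem_primesBelow.mpr ⟨?_, Nat.prime_of_mem_primeFactors hp⟩
      have := Nat.le_of_dvd (by omega) (Nat.dvd_of_mem_primeFactors hp)
      omega
    calc ∑ T ∈ n.primeFactors.powerset, ∏ p ∈ T, (6/(p:ℝ))
        = ∑ T ∈ n.primeFactors.powerset,
            (if (∏ p ∈ T, p) ∣ n then ∏ p ∈ T, (6/(p:ℝ)) else 0) := by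
          refine Finset.sum_congr rfl fun T hT => ?_
          rw [if_pos]
          refine Finset.prod_primes_dvd n (fun p hp => ?_) (fun p hp => ?_)
          · exact (Nat.prime_of_mem_primeFactors (Finset.mem_powerset.mp hT hp)).prime
          · exact Nat.dvd_of_mem_primeFactors (Finset.mem_powerset.mp hT hp)
      _ ≤ ∑ T ∈ P.powerset,
            (if (∏ p ∈ T, p) ∣ n then ∏ p ∈ T, (6/(p:ℝ)) else 0) := by
          apply Finset.sum_le_sum_of_subset_of_nonneg (Finset.powerset_mono.mpr hsub)
          intro T _ _
          split
          · positivity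
          · exact le_refl 0
  -- Step 2: swap sums and count multiples
  have step2 : ∑ n ∈ Icc 1 N, ∑ T ∈ P.powerset,
          (if (∏ p ∈ T, p) ∣ n then ∏ p ∈ T, (6/(p:ℝ)) else 0)
      ≤ (N:ℝ) * ∑ T ∈ P.powerset, ∏ p ∈ T, (6/((p:ℝ)^2)) := by
    rw [Finset.sum_comm, Finset.mul_sum]
    apply Finset.sum_le_sum
    intro T hT
    have hprimes : ∀ p ∈ T, p.Prime := fun p hp =>
      Nat.prime_of_mem_primesBelow (Finset.mem_powerset.mp hT hp)
    set d := ∏ p ∈ T, p with hd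
    have hdpos : 0 < d := Finset.prod_pos fun p hp => (hprimes p hp).pos
    have hcount : ∑ n ∈ Icc 1 N, (if d ∣ n then ∏ p ∈ T, (6/(p:ℝ)) else 0)
        = (↑(N / d) : ℝ) * ∏ p ∈ T, (6/(p:ℝ)) := by
      rw [← Finset.sum_filter, Finset.sum_const, nsmul_eq_mul]
      congr 2
      have : Icc 1 N = Ioc 0 N := rfl
      rw [this]
      exact Nat.Ioc_filter_dvd_card_eq_div N d
    rw [hcount]
    have h1 : (↑(N / d) : ℝ) ≤ (N:ℝ) / (d:ℝ) := Nat.cast_div_le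
    have hw : (0:ℝ) ≤ ∏ p ∈ T, (6/(p:ℝ)) := by positivity
    have h2 : (N:ℝ) / (d:ℝ) * ∏ p ∈ T, (6/(p:ℝ)) = (N:ℝ) * ∏ p ∈ T, (6/((p:ℝ)^2)) := by
      rw [hd, div_mul_eq_mul_div, mul_div_assoc]
      congr 1
      push_cast
      rw [← Finset.prod_div_distrib]
      refine Finset.prod_congr rfl fun p hp => ?_
      have : (0:ℝ) < (p:ℝ) := by exact_mod_cast (hprimes p hp).pos
      field_simp
    calc (↑(N / d) : ℝ) * ∏ p ∈ T, (6/(p:ℝ))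
        ≤ (N:ℝ) / (d:ℝ) * ∏ p ∈ T, (6/(p:ℝ)) := by
          apply mul_le_mul_of_nonneg_right h1 hw
      _ = (N:ℝ) * ∏ p ∈ T, (6/((p:ℝ)^2)) := h2
  -- Step 3: bound the sum over subsets by exp 12
  have step3 : ∑ T ∈ P.powerset, ∏ p ∈ T, (6/((p:ℝ)^2)) ≤ Real.exp 12 := by
    have expand : ∑ T ∈ P.powerset, ∏ p ∈ T, (6/((p:ℝ)^2))
        = ∏ p ∈ P, (1 + 6/((p:ℝ)^2)) := by
      have := Finset.prod_add (fun p : ℕ => 6/((p:ℝ)^2)) (fun _ => 1) P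
      simp only [Finset.prod_const_one, mul_one] at this
      rw [← this]
      exact (Finset.prod_congr rfl fun p _ => by ring).symm
    rw [expand]
    calc ∏ p ∈ P, (1 + 6/((p:ℝ)^2))
        ≤ ∏ p ∈ P, Real.exp (6/((p:ℝ)^2)) := by
          apply Finset.prod_le_prod
          · intro p hp; positivity
          · intro p hp; exact Real.add_one_le_exp _ |>.trans_eq (by ring) |> fun h => by
              have := Real.add_one_le_exp (6/((p:ℝ)^2)); linarith
      _ = Real.exp (∑ p ∈ P, 6/((p:ℝ)^2)) := (Real.exp_sum _ _).symm
      _ ≤ Real.exp 12 := by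
          apply Real.exp_le_exp.mpr
          have hsub : P ⊆ Icc 2 N := by
            intro p hp
            have h1 := Nat.prime_of_mem_primesBelow hp
            have h2 := Nat.lt_of_mem_primesBelow hp
            exact Finset.mem_Icc.mpr ⟨h1.two_le, by omega⟩
          calc ∑ p ∈ P, 6/((p:ℝ)^2) ≤ ∑ p ∈ Icc 2 N, 6/((p:ℝ)^2) := by
                apply Finset.sum_le_sum_of_subset_of_nonneg hsub
                intro p hp _
                have : 2 ≤ p := (Finset.mem_Icc.mp hp).1
                have : (0:ℝ) < (p:ℝ) := by exact_mod_cast (by omega : 0 < p)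
                positivity
            _ = 6 * ∑ p ∈ Icc 2 N, 1/((p:ℝ)^2) := by
                rw [Finset.mul_sum]
                exact Finset.sum_congr rfl fun p _ => by ring
            _ ≤ 6 * 1 := by
                have := sum_inv_sq_le N
                nlinarith [sum_inv_sq_le N]
            _ ≤ 12 := by norm_num
  calc ∑ n ∈ Icc 1 N, (n : ℝ) ^ 2 / (Nat.totient n : ℝ) ^ 2
      ≤ (N:ℝ) * ∑ T ∈ P.powerset, ∏ p ∈ T, (6/((p:ℝ)^2)) := le_trans step1 step2
    _ ≤ (N:ℝ) * Real.exp 12 := by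
        apply mul_le_mul_of_nonneg_left step3 (by positivity)
    _ ≤ Real.exp 12 * t := by
        rw [mul_comm]
        apply mul_le_mul_of_nonneg_left hNt (Real.exp_pos 12).le
end

section
/- Let f be a multiplicative arithmetic function with nonnegative values such that for every prime power p^k one has f(p^k) = 1 + c/p + O(p^{-2}) for a fixed constant c. Then the partial sums satisfy ∑_{n ≤ t} f(n) = O(t). -/
/-!
Since `f(p^k) ≤ 1 + A/p` with `A = |c| + |C|`, multiplicativity gives
`f(n) ≤ ∏_{p ∣ n} (1 + A/p) = ∑_{d ∣ n, d squarefree} ∏_{p ∣ d} A/p`.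
Exchanging the order of summation, `∑_{n ≤ N} f(n) ≤ N ∑_{d ≤ N, d squarefree} ∏_{p ∣ d} A/p²`,
and every squarefree `d ≤ N` divides the primorial of `N`, so the last sum is at most the partial
Euler product `∏_{p ≤ N} (1 + A/p²) ≤ exp (∑ A/n²)`.
-/

open Finset ArithmeticFunction

section OrderedSemiring

variable {R : Type*} [CommSemiring R] [PartialOrder R] [IsOrderedRing R]

theorem le_prod_primeFactors_one_add {f : ℕ → R} (hf1 : f 1 = 1)
    (hmul : ∀ m n : ℕ, Nat.Coprime m n → f (m * n) = f m * f n) (hf0 : ∀ n, 0 ≤ f n)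
    {u : ℕ → R} (hfu : ∀ p k : ℕ, p.Prime → 1 ≤ k → f (p ^ k) ≤ 1 + u p) {n : ℕ} (hn : n ≠ 0) :
    f n ≤ ∏ p ∈ n.primeFactors, (1 + u p) := by
  rw [Nat.multiplicative_factorization f hmul hf1 hn, Nat.prod_factorization_eq_prod_primeFactors]
  refine prod_le_prod (fun _ _ ↦ hf0 _) fun p hp ↦ ?_
  have hp' := Nat.prime_of_mem_primeFactors hp
  exact hfu p _ hp' (hp'.factorization_pos_of_dvd hn (Nat.dvd_of_mem_primeFactors hp))

theorem sum_squarefree_prod_primeFactors_le_prod_primesLE {v : ℕ → R} (hv : ∀ p, 0 ≤ v p) (N : ℕ) :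
    ∑ d ∈ Icc 1 N with Squarefree d, ∏ p ∈ d.primeFactors, v p ≤
      ∏ p ∈ Nat.primesLE N, (1 + v p) := by
  have hdvd : {d ∈ Icc 1 N | Squarefree d} ⊆ (primorial N).divisors := by
    intro d hd
    obtain ⟨hdN, hd⟩ := mem_filter.mp hd
    rw [Nat.mem_divisors, ← Nat.prod_primeFactors_of_squarefree hd,
      Nat.prod_primeFactors_dvd_iff (primorial_ne_zero N), primeFactors_primorial]
    refine ⟨fun p hp ↦ Nat.mem_primesLE.mpr ⟨?_, Nat.prime_of_mem_primeFactors hp⟩,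
      primorial_ne_zero N⟩
    exact (Nat.le_of_mem_primeFactors hp).trans (mem_Icc.mp hdN).2
  calc ∑ d ∈ Icc 1 N with Squarefree d, ∏ p ∈ d.primeFactors, v p
      = ∑ d ∈ Icc 1 N with Squarefree d, prodPrimeFactors v d :=
        sum_congr rfl fun d hd ↦
          (prodPrimeFactors_apply (Nat.pos_of_mem_divisors (hdvd hd)).ne').symm
    _ ≤ ∑ d ∈ (primorial N).divisors, prodPrimeFactors v d := by
        refine sum_le_sum_of_subset_of_nonneg hdvd fun d hd _ ↦ ?_
        rw [prodPrimeFactors_apply (Nat.pos_of_mem_divisors hd).ne']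
        exact prod_nonneg fun p _ ↦ hv p
    _ = ∏ p ∈ Nat.primesLE N, (1 + v p) := by
        rw [← (IsMultiplicative.prodPrimeFactors v).prodPrimeFactors_one_add_of_squarefree
          (squarefree_primorial N), primeFactors_primorial]
        refine prod_congr rfl fun p hp ↦ ?_
        have hp := Nat.prime_of_mem_primesLE hp
        rw [prodPrimeFactors_apply hp.ne_zero, hp.primeFactors, prod_singleton]

end OrderedSemiring

theorem prod_primeFactors_one_add_eq_sum_squarefree_divisors {R : Type*} [CommSemiring R]
    (u : ℕ → R) {n : ℕ} (hn : n ≠ 0) :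
    ∏ p ∈ n.primeFactors, (1 + u p) =
      ∑ d ∈ n.divisors with Squarefree d, ∏ p ∈ d.primeFactors, u p := by
  rw [Nat.sum_divisors_filter_squarefree hn, Nat.factors_eq, List.toFinset_coe,
    Nat.toFinset_factors, prod_one_add]
  refine sum_congr rfl fun S hS ↦ ?_
  rw [Finset.prod_val, Function.id_def, Nat.primeFactors_prod fun p hp ↦
    Nat.prime_of_mem_primeFactors (mem_powerset.mp hS hp)]

theorem prod_primeFactors_div_of_squarefree {K : Type*} [Field K] (u : ℕ → K) {d : ℕ}
    (hd : Squarefree d) :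
    (∏ p ∈ d.primeFactors, u p) / d = ∏ p ∈ d.primeFactors, u p / p := by
  rw [prod_div_distrib, ← Nat.cast_prod, Nat.prod_primeFactors_of_squarefree hd]

theorem sum_Icc_sum_divisors_eq {M : Type*} [AddCommMonoid M] (h : ℕ → M) (N : ℕ) :
    ∑ n ∈ Icc 1 N, ∑ d ∈ n.divisors, h d = ∑ d ∈ Icc 1 N, (N / d) • h d := by
  rw [sum_comm' (s' := fun d ↦ {n ∈ Icc 1 N | d ∣ n}) (t' := Icc 1 N)]
  · refine sum_congr rfl fun d _ ↦ ?_
    rw [sum_const, ← Nat.Ioc_filter_dvd_card_eq_div]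
    rfl
  · intro n d
    simp only [mem_Icc, Nat.mem_divisors, mem_filter]
    constructor
    · rintro ⟨hn, hdn, -⟩
      exact ⟨⟨hn, hdn⟩, Nat.pos_of_dvd_of_pos hdn hn.1, (Nat.le_of_dvd hn.1 hdn).trans hn.2⟩
    · rintro ⟨⟨hn, hdn⟩, -⟩
      exact ⟨hn, hdn, by omega⟩

theorem sum_Icc_sum_divisors_le {h : ℕ → ℝ} (hh : ∀ d, 0 ≤ h d) (N : ℕ) :
    ∑ n ∈ Icc 1 N, ∑ d ∈ n.divisors, h d ≤ N * ∑ d ∈ Icc 1 N, h d / d := by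
  rw [sum_Icc_sum_divisors_eq, mul_sum]
  refine sum_le_sum fun d _ ↦ ?_
  rw [nsmul_eq_mul, mul_div_left_comm, mul_comm]
  exact mul_le_mul_of_nonneg_left Nat.cast_div_le (hh d)

theorem sum_Icc_le_mul_exp_of_map_prime_pow_le {f : ℕ → ℝ} (hf1 : f 1 = 1)
    (hmul : ∀ m n : ℕ, Nat.Coprime m n → f (m * n) = f m * f n) (hf0 : ∀ n, 0 ≤ f n)
    {A : ℝ} (hA : 0 ≤ A) (hfA : ∀ p k : ℕ, p.Prime → 1 ≤ k → f (p ^ k) ≤ 1 + A / p) (N : ℕ) :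
    ∑ n ∈ Icc 1 N, f n ≤ N * Real.exp (∑' n : ℕ, A / (n : ℝ) ^ 2) := by
  set g : ℕ → ℝ := fun d ↦ if Squarefree d then ∏ p ∈ d.primeFactors, A / p else 0
  have hg : ∀ d, 0 ≤ g d := fun d ↦ by
    simp only [g]
    split_ifs
    exacts [prod_nonneg fun p _ ↦ by positivity, le_rfl]
  calc ∑ n ∈ Icc 1 N, f n ≤ ∑ n ∈ Icc 1 N, ∑ d ∈ n.divisors, g d := by
        refine sum_le_sum fun n hn ↦ ?_
        have hn0 : n ≠ 0 := Nat.one_le_iff_ne_zero.mp (mem_Icc.mp hn).1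
        rw [← sum_filter, ← prod_primeFactors_one_add_eq_sum_squarefree_divisors _ hn0]
        exact le_prod_primeFactors_one_add hf1 hmul hf0 hfA hn0
    _ ≤ N * ∑ d ∈ Icc 1 N, g d / d := sum_Icc_sum_divisors_le hg N
    _ = N * ∑ d ∈ Icc 1 N with Squarefree d, ∏ p ∈ d.primeFactors, A / (p : ℝ) ^ 2 := by
        rw [sum_filter]
        refine congrArg _ (sum_congr rfl fun d _ ↦ ?_)
        simp only [g]
        split_ifs with hd
        · simp only [prod_primeFactors_div_of_squarefree _ hd, div_div, sq]
        · exact zero_div _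
    _ ≤ N * ∏ p ∈ Nat.primesLE N, (1 + A / (p : ℝ) ^ 2) := by
        gcongr
        exact sum_squarefree_prod_primeFactors_le_prod_primesLE (fun p ↦ by positivity) N
    _ ≤ N * Real.exp (∑ p ∈ Nat.primesLE N, A / (p : ℝ) ^ 2) := by
        gcongr
        exact Real.prod_one_add_le_exp_sum _ fun p ↦ by positivity
    _ ≤ N * Real.exp (∑' n : ℕ, A / (n : ℝ) ^ 2) := by
        gcongr
        exact ((Real.summable_nat_pow_inv.mpr one_lt_two).mul_left A).sum_le_tsum _
          fun n _ ↦ by positivity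

theorem le_one_add_div_of_abs_sub_le {x c C p : ℝ} (hp : 1 ≤ p)
    (h : |x - 1 - c / p| ≤ C / p ^ 2) : x ≤ 1 + (|c| + |C|) / p := by
  have hc : c / p ≤ |c| / p := div_le_div_of_nonneg_right (le_abs_self c) (by linarith)
  have hC : C / p ^ 2 ≤ |C| / p :=
    calc C / p ^ 2 ≤ |C| / p ^ 2 := div_le_div_of_nonneg_right (le_abs_self C) (by positivity)
      _ ≤ |C| / p := div_le_div_of_nonneg_left (abs_nonneg C) (by linarith) (by nlinarith)
  rw [add_div]
  linarith [(abs_le.mp h).2]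

/-- Wirsing-type bound: if `f` is a nonnegative multiplicative function with
`f(p^k) = 1 + c/p + O(p⁻²)` for all prime powers, then `∑_{n ≤ t} f n = O(t)`. -/
theorem wirsing_bound (f : ℕ → ℝ) (hmul : f 1 = 1 ∧ ∀ m n : ℕ, Nat.Coprime m n → f (m * n) = f m * f n)
    (hnonneg : ∀ n : ℕ, 0 ≤ f n) (c C : ℝ)
    (hpk : ∀ p k : ℕ, p.Prime → 1 ≤ k → |f (p ^ k) - 1 - c / p| ≤ C / (p : ℝ) ^ 2) :
    ∃ K : ℝ, ∀ t : ℝ, 2 ≤ t → ∑ n ∈ Finset.Icc 1 ⌊t⌋₊, f n ≤ K * t := by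
  obtain ⟨hf1, hmul⟩ := hmul
  have hfA (p k : ℕ) (hp : p.Prime) (hk : 1 ≤ k) : f (p ^ k) ≤ 1 + (|c| + |C|) / p :=
    le_one_add_div_of_abs_sub_le (by exact_mod_cast hp.one_le) (hpk p k hp hk)
  refine ⟨Real.exp (∑' n : ℕ, (|c| + |C|) / (n : ℝ) ^ 2), fun t ht ↦ ?_⟩
  rw [mul_comm]
  calc ∑ n ∈ Icc 1 ⌊t⌋₊, f n ≤ ⌊t⌋₊ * _ :=
        sum_Icc_le_mul_exp_of_map_prime_pow_le hf1 hmul hnonneg (by positivity) hfA _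
    _ ≤ t * _ := by
        gcongr
        exact Nat.floor_le (by linarith)
end

section
/- Let f(X) ∈ ℤ[X], λ a nonzero integer, and let ℓ, p be distinct primes with gcd(ℓp, λ) = 1 and coprime multiplicative orders τ_ℓ, τ_p of λ. For an integer a define integers a_ℓ, a_p by a_ℓ·τ_p + a_p·τ_ℓ ≡ a (mod τ_ℓ·τ_p), 0 ≤ a_ℓ < τ_ℓ, 0 ≤ a_p < τ_p. Then ∑_{n=1}^{τ_ℓ τ_p} (f(λⁿ) | ℓp) e(an/(τ_ℓ τ_p)) = [∑_{x=1}^{τ_ℓ} (f(λˣ) | ℓ) e(a_ℓ x/τ_ℓ)] · [∑_{y=1}^{τ_p} (f(λʸ) | p) e(a_p y/τ_p)], where (· | m) is the Jacobi symbol and e(t) = exp(2πit). -/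
open Complex Polynomial Function Finset
open scoped Real

/-!
Write `S_q(b, τ; n) = (f(λⁿ) | q) e(bn/τ)`. Since `λ^τ_q ≡ 1 (mod q)`, the sequence `S_q(b, τ_q; ·)`
has period `τ_q`. Multiplicativity of the Jacobi symbol in the modulus, together with
`a ≡ a_ℓ τ_p + a_p τ_ℓ (mod τ_ℓ τ_p)`, splits the summand of the left-hand side as
`S_ℓ(a_ℓ, τ_ℓ; n) · S_p(a_p, τ_p; n)`. By the Chinese remainder theorem `n ↦ (n mod τ_ℓ, n mod τ_p)`
maps a full period `0 ≤ n < τ_ℓ τ_p` bijectively onto pairs of periods, so the sum of the product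
is the product of the sums.
-/

theorem Function.Periodic.sum_Icc_one_eq_sum_range {M : Type*} [AddCommMonoid M] {F : ℕ → M}
    {N : ℕ} (hF : Periodic F N) :
    ∑ n ∈ Icc 1 N, F n = ∑ n ∈ range N, F n := by
  rw [← Finset.Ico_add_one_right_eq_Icc, sum_Ico_eq_sum_range, Nat.add_sub_cancel]
  cases N with
  | zero => rfl
  | succ m =>
    have hF0 : F (m + 1) = F 0 := by simpa using hF 0
    simp only [add_comm 1]
    rw [sum_range_succ, hF0, sum_range_succ' F]

theorem Nat.injOn_mod_mod_range_mul {s t : ℕ} (hst : s.Coprime t) :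
    Set.InjOn (fun n => (n % s, n % t)) (range (s * t) : Set ℕ) := by
  intro m hm n hn hmn
  simp only [Prod.mk.injEq] at hmn
  exact ((Nat.modEq_and_modEq_iff_modEq_mul hst).mp hmn).eq_of_lt_of_lt
    (mem_range.mp hm) (mem_range.mp hn)

theorem Finset.sum_range_mul_eq_sum_mul_sum_of_periodic {R : Type*} [CommSemiring R]
    {s t : ℕ} (hst : s.Coprime t) {F G : ℕ → R} (hF : Periodic F s) (hG : Periodic G t) :
    ∑ n ∈ range (s * t), F n * G n = (∑ x ∈ range s, F x) * ∑ y ∈ range t, G y := by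
  have hmaps : ∀ n ∈ range (s * t), (n % s, n % t) ∈ range s ×ˢ range t := by
    intro n hn
    have hst0 : 0 < s * t := Nat.zero_lt_of_lt (mem_range.mp hn)
    exact mem_product.mpr ⟨mem_range.mpr (Nat.mod_lt _ (Nat.pos_of_mul_pos_right hst0)),
      mem_range.mpr (Nat.mod_lt _ (Nat.pos_of_mul_pos_left hst0))⟩
  rw [sum_mul_sum, ← sum_product']
  refine sum_nbij (fun n => (n % s, n % t)) hmaps (Nat.injOn_mod_mod_range_mul hst) ?_
    fun n _ => by rw [hF.map_mod_nat, hG.map_mod_nat]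
  exact surjOn_of_injOn_of_card_le _ hmaps (Nat.injOn_mod_mod_range_mul hst) (by simp)

theorem Complex.exp_two_pi_I_mul_add_intCast (z : ℂ) (k : ℤ) :
    exp (2 * π * I * (z + k)) = exp (2 * π * I * z) := by
  rw [mul_add, mul_comm _ (k : ℂ)]
  exact (exp_periodic.int_mul k) _

theorem Complex.periodic_exp_two_pi_I_mul_div (b τ : ℕ) :
    Periodic (fun n : ℕ => exp (2 * π * I * ((b : ℂ) * n / τ))) τ := by
  intro n
  rcases eq_or_ne τ 0 with rfl | hτ
  · simp
  · have : (b : ℂ) * (n + τ : ℕ) / τ = (b : ℂ) * n / τ + (b : ℤ) := by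
      push_cast
      field_simp
    simp only [this, exp_two_pi_I_mul_add_intCast]

theorem Complex.exp_two_pi_I_mul_div_mul_eq_mul {s t : ℕ} (hs : s ≠ 0) (ht : t ≠ 0) {a : ℤ}
    {b c : ℕ} (habc : ((b * t + c * s : ℕ) : ZMod (s * t)) = a) (n : ℕ) :
    exp (2 * π * I * ((a : ℂ) * n / ((s : ℂ) * t)))
      = exp (2 * π * I * ((b : ℂ) * n / s)) * exp (2 * π * I * ((c : ℂ) * n / t)) := by
  obtain ⟨k, hk⟩ := (ZMod.intCast_eq_intCast_iff_dvd_sub ((b * t + c * s : ℕ) : ℤ) a (s * t)).mp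
    (by exact_mod_cast habc)
  have hsplit :
      (a : ℂ) * n / ((s : ℂ) * t) = ((b : ℂ) * n / s + (c : ℂ) * n / t) + (k * n : ℤ) := by
    rw [← sub_add_cancel a ((b * t + c * s : ℕ) : ℤ), hk]
    push_cast
    field_simp
    ring
  rw [hsplit, exp_two_pi_I_mul_add_intCast, mul_add, exp_add]

theorem Int.ModEq.polynomial_eval {n a b : ℤ} (f : ℤ[X]) (h : a ≡ b [ZMOD n]) :
    f.eval a ≡ f.eval b [ZMOD n] :=
  Int.modEq_iff_dvd.mpr (h.dvd.trans (sub_dvd_eval_sub b a f))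

theorem jacobiSym_eval_pow_periodic (f : ℤ[X]) {l : ℤ} {q τ : ℕ} (h : l ^ τ ≡ 1 [ZMOD q]) :
    Periodic (fun n : ℕ => jacobiSym (f.eval (l ^ n)) q) τ :=
  fun n => jacobiSym.mod_left' <| Int.ModEq.polynomial_eval f <| by
    simpa [pow_add] using (Int.ModEq.refl (l ^ n)).mul h

theorem Int.pow_orderOf_intCast_modEq_one (l : ℤ) (q : ℕ) : l ^ orderOf (l : ZMod q) ≡ 1 [ZMOD q] :=
  (ZMod.intCast_eq_intCast_iff _ _ _).mp (by push_cast; exact pow_orderOf_eq_one _)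

theorem ZMod.orderOf_intCast_pos {q : ℕ} [NeZero q] {l : ℤ} (h : IsCoprime (q : ℤ) l) :
    0 < orderOf (l : ZMod q) :=
  ((ZMod.coe_int_isUnit_iff_isCoprime l q).mpr h).isOfFinOrder.orderOf_pos

noncomputable def jacobiExpSummand (f : ℤ[X]) (l : ℤ) (q b τ n : ℕ) : ℂ :=
  (jacobiSym (f.eval (l ^ n)) q : ℂ) * exp (2 * π * I * ((b : ℂ) * n / τ))

theorem periodic_jacobiExpSummand (f : ℤ[X]) {l : ℤ} {q τ : ℕ} (b : ℕ) (h : l ^ τ ≡ 1 [ZMOD q]) :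
    Periodic (jacobiExpSummand f l q b τ) τ :=
  ((jacobiSym_eval_pow_periodic f h).comp Int.cast).mul (periodic_exp_two_pi_I_mul_div b τ)

theorem jacobiSym_mul_exp_eq_jacobiExpSummand_mul (f : ℤ[X]) (l : ℤ) {q r s t : ℕ}
    [NeZero q] [NeZero r] (hs : s ≠ 0) (ht : t ≠ 0) {a : ℤ} {b c : ℕ}
    (habc : ((b * t + c * s : ℕ) : ZMod (s * t)) = a) (n : ℕ) :
    (jacobiSym (f.eval (l ^ n)) (q * r) : ℂ) * exp (2 * π * I * ((a : ℂ) * n / ((s : ℂ) * t)))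
      = jacobiExpSummand f l q b s n * jacobiExpSummand f l r c t n := by
  rw [jacobiSym.mul_right, Int.cast_mul, exp_two_pi_I_mul_div_mul_eq_mul hs ht habc,
    jacobiExpSummand, jacobiExpSummand]
  ring

theorem jacobi_sum_factorization_general (f : Polynomial ℤ) (l : ℤ)
    (ℓ p : ℕ) (hℓ : ℓ.Prime) (hp : p.Prime)
    (hcop : IsCoprime ((ℓ : ℤ) * p) l)
    (τℓ τp : ℕ) (hτℓ : τℓ = orderOf (l : ZMod ℓ)) (hτp : τp = orderOf (l : ZMod p))
    (hτcop : Nat.Coprime τℓ τp)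
    (a : ℤ) (aℓ ap : ℕ)
    (hcong : ((aℓ * τp + ap * τℓ : ℕ) : ZMod (τℓ * τp)) = (a : ZMod (τℓ * τp))) :
    ∑ n ∈ Finset.Icc 1 (τℓ * τp),
        (jacobiSym (f.eval (l ^ n)) (ℓ * p) : ℂ) *
          Complex.exp (2 * Real.pi * Complex.I * ((a : ℂ) * n / ((τℓ : ℂ) * τp)))
      = (∑ x ∈ Finset.Icc 1 τℓ,
          (jacobiSym (f.eval (l ^ x)) ℓ : ℂ) *
            Complex.exp (2 * Real.pi * Complex.I * ((aℓ : ℂ) * x / (τℓ : ℂ)))) *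
        (∑ y ∈ Finset.Icc 1 τp,
          (jacobiSym (f.eval (l ^ y)) p : ℂ) *
            Complex.exp (2 * Real.pi * Complex.I * ((ap : ℂ) * y / (τp : ℂ)))) := by
  have : NeZero ℓ := ⟨hℓ.ne_zero⟩
  have : NeZero p := ⟨hp.ne_zero⟩
  have hτℓ0 : τℓ ≠ 0 := hτℓ ▸ (ZMod.orderOf_intCast_pos hcop.of_mul_left_left).ne'
  have hτp0 : τp ≠ 0 := hτp ▸ (ZMod.orderOf_intCast_pos hcop.of_mul_left_right).ne'
  have hFℓ := periodic_jacobiExpSummand f aℓ (hτℓ ▸ Int.pow_orderOf_intCast_modEq_one l ℓ)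
  have hFp := periodic_jacobiExpSummand f ap (hτp ▸ Int.pow_orderOf_intCast_modEq_one l p)
  have hF : Periodic (fun n => jacobiExpSummand f l ℓ aℓ τℓ n * jacobiExpSummand f l p ap τp n)
      (τℓ * τp) := (mul_comm τp τℓ ▸ hFℓ.nat_mul τp).mul (hFp.nat_mul τℓ)
  calc _ = ∑ n ∈ Icc 1 (τℓ * τp), jacobiExpSummand f l ℓ aℓ τℓ n * jacobiExpSummand f l p ap τp n :=
        sum_congr rfl fun n _ =>
          jacobiSym_mul_exp_eq_jacobiExpSummand_mul f l hτℓ0 hτp0 hcong n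
    _ = (∑ x ∈ range τℓ, jacobiExpSummand f l ℓ aℓ τℓ x)
          * ∑ y ∈ range τp, jacobiExpSummand f l p ap τp y := by
        rw [hF.sum_Icc_one_eq_sum_range, sum_range_mul_eq_sum_mul_sum_of_periodic hτcop hFℓ hFp]
    _ = _ := by
        rw [← hFℓ.sum_Icc_one_eq_sum_range, ← hFp.sum_Icc_one_eq_sum_range]
        rfl

/-- Korobov-type factorization of a complete Jacobi-symbol sum with an exponential
function to coprime prime moduli. -/
theorem jacobi_sum_factorization (f : Polynomial ℤ) (l : ℤ) (hl0 : l ≠ 0)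
    (ℓ p : ℕ) (hℓ : ℓ.Prime) (hp : p.Prime) (hne : ℓ ≠ p)
    (hcop : IsCoprime ((ℓ : ℤ) * p) l)
    (τℓ τp : ℕ) (hτℓ : τℓ = orderOf (l : ZMod ℓ)) (hτp : τp = orderOf (l : ZMod p))
    (hτcop : Nat.Coprime τℓ τp)
    (a : ℤ) (aℓ ap : ℕ) (haℓ : aℓ < τℓ) (hap : ap < τp)
    (hcong : ((aℓ * τp + ap * τℓ : ℕ) : ZMod (τℓ * τp)) = (a : ZMod (τℓ * τp))) :
    ∑ n ∈ Finset.Icc 1 (τℓ * τp),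
        (jacobiSym (f.eval (l ^ n)) (ℓ * p) : ℂ) *
          Complex.exp (2 * Real.pi * Complex.I * ((a : ℂ) * n / ((τℓ : ℂ) * τp)))
      = (∑ x ∈ Finset.Icc 1 τℓ,
          (jacobiSym (f.eval (l ^ x)) ℓ : ℂ) *
            Complex.exp (2 * Real.pi * Complex.I * ((aℓ : ℂ) * x / (τℓ : ℂ)))) *
        (∑ y ∈ Finset.Icc 1 τp,
          (jacobiSym (f.eval (l ^ y)) p : ℂ) *
            Complex.exp (2 * Real.pi * Complex.I * ((ap : ℂ) * y / (τp : ℂ)))) :=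
  jacobi_sum_factorization_general f l ℓ p hℓ hp hcop τℓ τp hτℓ hτp hτcop a aℓ ap hcong
end

section
/- Let ℬ(z) = ∑_{j=1}^J A_j z^{B_j} + ∑_{k=1}^K C_k z^{−D_k} with all A_j, B_j, C_k, D_k > 0. For any 0 < z₁ ≤ z₂ there exists z ∈ [z₁, z₂] such that ℬ(z) ≪ ∑_{j,k} (A_j^{D_k} C_k^{B_j})^{1/(B_j+D_k)} + ∑_j A_j z₁^{B_j} + ∑_k C_k z₂^{−D_k}, with an implied constant depending only on J and K. -/
open Finset

private lemma contOn_sup' {ι : Type*} {t : Set ℝ} (s : Finset ι) (hs : s.Nonempty)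
    (f : ι → ℝ → ℝ) (h : ∀ i ∈ s, ContinuousOn (f i) t) :
    ContinuousOn (fun x => s.sup' hs (fun i => f i x)) t := by
  induction hs using Finset.Nonempty.cons_induction with
  | singleton a => simpa using h a (by simp)
  | cons a s ha hs ih =>
    simp only [Finset.sup'_cons hs]
    exact (h a (by simp)).sup (ih (fun i hi => h i (Finset.mem_cons_of_mem hi)))

set_option maxHeartbeats 1000000 in
/-- Graham–Kolesnik optimization lemma: for `ℬ(z) = ∑_j A_j z^{B_j} + ∑_k C_k z^{−D_k}`
with all parameters positive and `0 < z₁ ≤ z₂`, there is `z ∈ [z₁, z₂]` with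
`ℬ(z) ≪ ∑_{j,k} (A_j^{D_k} C_k^{B_j})^{1/(B_j+D_k)} + ∑_j A_j z₁^{B_j} + ∑_k C_k z₂^{−D_k}`,
the implied constant depending only on `J` and `K`. -/
theorem graham_kolesnik (J K : ℕ) (hJ : 1 ≤ J) (hK : 1 ≤ K) :
    ∃ c : ℝ, 0 < c ∧
      ∀ (A B : Fin J → ℝ) (C D : Fin K → ℝ),
        (∀ j, 0 < A j) → (∀ j, 0 < B j) → (∀ k, 0 < C k) → (∀ k, 0 < D k) →
        ∀ z₁ z₂ : ℝ, 0 < z₁ → z₁ ≤ z₂ →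
          ∃ z ∈ Set.Icc z₁ z₂,
            (∑ j, A j * z ^ (B j)) + (∑ k, C k * z ^ (-(D k)))
              ≤ c * ((∑ j, ∑ k, (A j ^ (D k) * C k ^ (B j)) ^ (1 / (B j + D k)))
                + (∑ j, A j * z₁ ^ (B j)) + (∑ k, C k * z₂ ^ (-(D k)))) := by
  refine ⟨(J : ℝ) + K + 1, by positivity, ?_⟩
  intro A B C D hA hB hC hD z₁ z₂ hz₁ hz12
  haveI : Nonempty (Fin J) := Fin.pos_iff_nonempty.mp hJ
  haveI : Nonempty (Fin K) := Fin.pos_iff_nonempty.mp hK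
  have hz₂ : 0 < z₂ := lt_of_lt_of_le hz₁ hz12
  have hJ' : (1:ℝ) ≤ J := by exact_mod_cast hJ
  have hK' : (1:ℝ) ≤ K := by exact_mod_cast hK
  have hneJ : (Finset.univ : Finset (Fin J)).Nonempty := univ_nonempty
  have hneK : (Finset.univ : Finset (Fin K)).Nonempty := univ_nonempty
  set F : ℝ → ℝ := fun z => univ.sup' hneJ (fun j => A j * z ^ (B j)) with hFdef
  set G : ℝ → ℝ := fun z => univ.sup' hneK (fun k => C k * z ^ (-(D k))) with hGdef
  -- nonnegativity of the three RHS pieces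
  have hEnn : ∀ j k, 0 ≤ (A j ^ (D k) * C k ^ (B j)) ^ (1 / (B j + D k)) := fun j k =>
    Real.rpow_nonneg (mul_nonneg (Real.rpow_nonneg (hA j).le _) (Real.rpow_nonneg (hC k).le _)) _
  set S : ℝ := ∑ j, ∑ k, (A j ^ (D k) * C k ^ (B j)) ^ (1 / (B j + D k)) with hSdef
  have hS : 0 ≤ S := Finset.sum_nonneg fun j _ => Finset.sum_nonneg fun k _ => hEnn j k
  have hT1nn : ∀ z : ℝ, 0 < z → ∀ j : Fin J, 0 ≤ A j * z ^ (B j) := fun z hz j =>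
    mul_nonneg (hA j).le (Real.rpow_nonneg hz.le _)
  have hT2nn : ∀ z : ℝ, 0 < z → ∀ k : Fin K, 0 ≤ C k * z ^ (-(D k)) := fun z hz k =>
    mul_nonneg (hC k).le (Real.rpow_nonneg hz.le _)
  have hT1 : 0 ≤ ∑ j, A j * z₁ ^ (B j) := Finset.sum_nonneg fun j _ => hT1nn z₁ hz₁ j
  have hT2 : 0 ≤ ∑ k, C k * z₂ ^ (-(D k)) := Finset.sum_nonneg fun k _ => hT2nn z₂ hz₂ k
  -- sums bounded by card times the max
  have sumF : ∀ z : ℝ, (∑ j, A j * z ^ (B j)) ≤ (J : ℝ) * F z := by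
    intro z
    calc (∑ j, A j * z ^ (B j)) ≤ ∑ _j : Fin J, F z :=
          Finset.sum_le_sum fun j _ =>
            Finset.le_sup' (fun j => A j * z ^ (B j)) (mem_univ j)
      _ = (J : ℝ) * F z := by simp [mul_comm]
  have sumG : ∀ z : ℝ, (∑ k, C k * z ^ (-(D k))) ≤ (K : ℝ) * G z := by
    intro z
    calc (∑ k, C k * z ^ (-(D k))) ≤ ∑ _k : Fin K, G z :=
          Finset.sum_le_sum fun k _ =>
            Finset.le_sup' (fun k => C k * z ^ (-(D k))) (mem_univ k)
      _ = (K : ℝ) * G z := by simp [mul_comm]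
  -- maxes bounded by sums (terms are nonneg)
  have Fle : ∀ z : ℝ, 0 < z → F z ≤ ∑ j, A j * z ^ (B j) := fun z hz =>
    Finset.sup'_le _ _ fun j _ => Finset.single_le_sum (fun i _ => hT1nn z hz i) (mem_univ j)
  have Gle : ∀ z : ℝ, 0 < z → G z ≤ ∑ k, C k * z ^ (-(D k)) := fun z hz =>
    Finset.sup'_le _ _ fun k _ => Finset.single_le_sum (fun i _ => hT2nn z hz i) (mem_univ k)
  by_cases h1 : G z₁ ≤ F z₁
  · -- take z = z₁
    refine ⟨z₁, ⟨le_refl z₁, hz12⟩, ?_⟩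
    have b1 : (∑ k, C k * z₁ ^ (-(D k))) ≤ (K : ℝ) * F z₁ :=
      (sumG z₁).trans (mul_le_mul_of_nonneg_left h1 (by positivity))
    have b2 : (K : ℝ) * F z₁ ≤ (K : ℝ) * ∑ j, A j * z₁ ^ (B j) :=
      mul_le_mul_of_nonneg_left (Fle z₁ hz₁) (by positivity)
    nlinarith [mul_nonneg (by positivity : (0:ℝ) ≤ (J:ℝ) + K + 1) hS,
      mul_nonneg (by positivity : (0:ℝ) ≤ (J:ℝ) + K + 1) hT2,
      mul_nonneg (by linarith : (0:ℝ) ≤ (J:ℝ)) hT1]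
  by_cases h2 : F z₂ ≤ G z₂
  · -- take z = z₂
    refine ⟨z₂, ⟨hz12, le_refl z₂⟩, ?_⟩
    have b1 : (∑ j, A j * z₂ ^ (B j)) ≤ (J : ℝ) * G z₂ :=
      (sumF z₂).trans (mul_le_mul_of_nonneg_left h2 (by positivity))
    have b2 : (J : ℝ) * G z₂ ≤ (J : ℝ) * ∑ k, C k * z₂ ^ (-(D k)) :=
      mul_le_mul_of_nonneg_left (Gle z₂ hz₂) (by positivity)
    nlinarith [mul_nonneg (by positivity : (0:ℝ) ≤ (J:ℝ) + K + 1) hS,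
      mul_nonneg (by positivity : (0:ℝ) ≤ (J:ℝ) + K + 1) hT1,
      mul_nonneg (by linarith : (0:ℝ) ≤ (K:ℝ)) hT2]
  -- crossing case: use the intermediate value theorem
  push_neg at h1 h2
  have hcontF : ContinuousOn F (Set.Icc z₁ z₂) := by
    refine contOn_sup' _ _ _ fun j _ => continuousOn_const.mul fun x hx => ?_
    exact (Real.continuousAt_rpow_const x (B j)
      (Or.inl (ne_of_gt (lt_of_lt_of_le hz₁ hx.1)))).continuousWithinAt
  have hcontG : ContinuousOn G (Set.Icc z₁ z₂) := by
    refine contOn_sup' _ _ _ fun k _ => continuousOn_const.mul fun x hx => ?_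
    exact (Real.continuousAt_rpow_const x (-(D k))
      (Or.inl (ne_of_gt (lt_of_lt_of_le hz₁ hx.1)))).continuousWithinAt
  have hmem : (0:ℝ) ∈ Set.Icc (F z₁ - G z₁) (F z₂ - G z₂) := ⟨by linarith, by linarith⟩
  obtain ⟨z, hzmem, hz0⟩ := intermediate_value_Icc hz12 (hcontF.sub hcontG) hmem
  have hz0' : F z - G z = 0 := hz0
  have hFG : F z = G z := by linarith
  have zpos : 0 < z := lt_of_lt_of_le hz₁ hzmem.1
  obtain ⟨j₀, -, hj₀⟩ := Finset.exists_mem_eq_sup' hneJ (fun j => A j * z ^ (B j))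
  obtain ⟨k₀, -, hk₀⟩ := Finset.exists_mem_eq_sup' hneK (fun k => C k * z ^ (-(D k)))
  refine ⟨z, hzmem, ?_⟩
  set p := B j₀ with hp
  set q := D k₀ with hq
  set a := A j₀ with ha
  set b := C k₀ with hb
  have heq : a * z ^ p = b * z ^ (-q) := by
    have h1 : F z = a * z ^ p := hj₀
    have h2 : G z = b * z ^ (-q) := hk₀
    rw [← h1, ← h2, hFG]
  set f : ℝ := a * z ^ p with hfdef
  have hf : 0 < f := mul_pos (hA j₀) (Real.rpow_pos_of_pos zpos _)
  have hpq : 0 < p + q := add_pos (hB j₀) (hD k₀)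
  -- key identity: f = (a^q b^p)^(1/(p+q))
  have e1 : f ^ q = a ^ q * z ^ (p * q) := by
    rw [hfdef, Real.mul_rpow (hA j₀).le (Real.rpow_nonneg zpos.le _), ← Real.rpow_mul zpos.le]
  have e2 : f ^ p = b ^ p * z ^ (-q * p) := by
    rw [heq, Real.mul_rpow (hC k₀).le (Real.rpow_nonneg zpos.le _),
      ← Real.rpow_mul zpos.le]
  have hzz : z ^ (-q * p) * z ^ (p * q) = 1 := by
    rw [← Real.rpow_add zpos, show -q * p + p * q = 0 by ring, Real.rpow_zero]
  have hkey1 : f ^ (p + q) = a ^ q * b ^ p := by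
    calc f ^ (p + q) = f ^ p * f ^ q := Real.rpow_add hf p q
      _ = (a ^ q * b ^ p) * (z ^ (-q * p) * z ^ (p * q)) := by rw [e1, e2]; ring
      _ = a ^ q * b ^ p := by rw [hzz, mul_one]
  have hkey : f = (a ^ q * b ^ p) ^ (1 / (p + q)) := by
    rw [← hkey1, ← Real.rpow_mul hf.le, mul_one_div_cancel (ne_of_gt hpq), Real.rpow_one]
  -- conclude
  have hfS : f ≤ S := by
    have h3 : (a ^ q * b ^ p) ^ (1 / (p + q))
        ≤ ∑ k, (A j₀ ^ (D k) * C k ^ (B j₀)) ^ (1 / (B j₀ + D k)) :=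
      Finset.single_le_sum (fun k _ => hEnn j₀ k) (mem_univ k₀)
    have h4 : (∑ k, (A j₀ ^ (D k) * C k ^ (B j₀)) ^ (1 / (B j₀ + D k))) ≤ S :=
      Finset.single_le_sum
        (fun j _ => Finset.sum_nonneg fun k _ => hEnn j k) (mem_univ j₀)
    rw [hkey]; exact h3.trans h4
  have hFz : F z = f := hj₀
  have hGz : G z = f := by rw [show G z = b * z ^ (-q) from hk₀, ← heq]
  have bF : (∑ j, A j * z ^ (B j)) ≤ (J : ℝ) * f := by
    have := sumF z; rw [hFz] at this; exact this
  have bG : (∑ k, C k * z ^ (-(D k))) ≤ (K : ℝ) * f := by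
    have := sumG z; rw [hGz] at this; exact this
  have hJK : (0:ℝ) ≤ (J:ℝ) + K := by positivity
  nlinarith [mul_le_mul_of_nonneg_left hfS hJK,
    mul_nonneg (by positivity : (0:ℝ) ≤ (J:ℝ) + K + 1) hT1,
    mul_nonneg (by positivity : (0:ℝ) ≤ (J:ℝ) + K + 1) hT2, hS]
end

section
/- Let S, N be positive reals with S ≤ N, and 1/2 < α < 1, and set θ = (1−α)²(1+3α)/((1+α²)(3α−1)). Define T₁₂ = S^{1/2} N^{(3−α)/(1+3α)}, T₂₁ = S·N^{(1−α)/(1+α)}, and T₂₂ = S^{(7α−3)/(6α−2)} N^{(1−α)/(3α−1)}. Then T₂₂ ≤ T₁₂^θ · T₂₁^{1−θ} ≤ max{T₁₂, T₂₁}. -/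
/-!
θ is exactly the weight for which the `N`-exponents interpolate:
`(3-α)/(1+3α)·θ + (1-α)/(1+α)·(1-θ) = (1-α)/(3α-1)`. Since moreover `θ ≤ (1-α)/(3α-1)`, the
`S`-exponent `1 - θ/2` of `T₁₂^θ T₂₁^(1-θ)` dominates `(7α-3)/(6α-2) = 1 - (1-α)/(2(3α-1))`, and
`S ≥ 1` gives the first inequality. The second is weighted AM–GM.
-/

open Real

theorem rpow_mul_rpow_one_sub_le_max {a b θ : ℝ} (ha : 0 ≤ a) (hb : 0 ≤ b)
    (hθ₀ : 0 ≤ θ) (hθ₁ : θ ≤ 1) : a ^ θ * b ^ (1 - θ) ≤ max a b := by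
  calc a ^ θ * b ^ (1 - θ) ≤ θ * a + (1 - θ) * b :=
        geom_mean_le_arith_mean2_weighted hθ₀ (sub_nonneg.2 hθ₁) ha hb (by ring)
    _ ≤ θ * max a b + (1 - θ) * max a b :=
        add_le_add (mul_le_mul_of_nonneg_left (le_max_left a b) hθ₀)
          (mul_le_mul_of_nonneg_left (le_max_right a b) (sub_nonneg.2 hθ₁))
    _ = max a b := by ring

theorem rpow_mul_rpow_interpolate {x y : ℝ} (hx : 0 < x) (hy : 0 < y) (a b c d θ : ℝ) :
    (x ^ a * y ^ b) ^ θ * (x ^ c * y ^ d) ^ (1 - θ)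
      = x ^ (a * θ + c * (1 - θ)) * y ^ (b * θ + d * (1 - θ)) := by
  rw [mul_rpow (by positivity) (by positivity), mul_rpow (by positivity) (by positivity),
    ← rpow_mul hx.le, ← rpow_mul hy.le, ← rpow_mul hx.le, ← rpow_mul hy.le,
    rpow_add hx, rpow_add hy]
  ring

noncomputable def interpWeight (α : ℝ) : ℝ :=
  (1 - α) ^ 2 * (1 + 3 * α) / ((1 + α ^ 2) * (3 * α - 1))

section interpWeight

variable {α : ℝ}

theorem interpWeight_nonneg (h₁ : 1 / 2 < α) : 0 ≤ interpWeight α := by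
  unfold interpWeight
  apply div_nonneg <;> nlinarith

theorem interpWeight_le_div (h₁ : 1 / 2 < α) (h₂ : α < 1) :
    interpWeight α ≤ (1 - α) / (3 * α - 1) := by
  have h3 : 0 < 3 * α - 1 := by linarith
  unfold interpWeight
  rw [div_le_div_iff₀ (by positivity) h3]
  -- the difference of the two sides is `2α(2α-1)(1-α)(3α-1)`
  nlinarith [mul_nonneg (mul_nonneg h3.le (by linarith : (0:ℝ) ≤ 1 - α))
      (mul_nonneg (by linarith : (0:ℝ) ≤ α) (by linarith : (0:ℝ) ≤ 2 * α - 1))]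

theorem interpWeight_le_one (h₁ : 1 / 2 < α) (h₂ : α < 1) : interpWeight α ≤ 1 := by
  have : (1 - α) / (3 * α - 1) ≤ 1 := by
    rw [div_le_one (by linarith)]; linarith
  exact (interpWeight_le_div h₁ h₂).trans this

theorem exponent_N_interpolate (h₁ : 1 / 2 < α) :
    (3 - α) / (1 + 3 * α) * interpWeight α + (1 - α) / (1 + α) * (1 - interpWeight α)
      = (1 - α) / (3 * α - 1) := by
  have : 3 * α - 1 ≠ 0 := by linarith
  have : 1 + 3 * α ≠ 0 := by linarith
  have : 1 + α ≠ 0 := by linarith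
  unfold interpWeight
  field_simp
  ring

theorem exponent_S_le_interpolate (h₁ : 1 / 2 < α) (h₂ : α < 1) :
    (7 * α - 3) / (6 * α - 2) ≤ 1 / 2 * interpWeight α + 1 * (1 - interpWeight α) := by
  have h3 : 3 * α - 1 ≠ 0 := by linarith
  have : (7 * α - 3) / (6 * α - 2) = 1 - (1 - α) / (3 * α - 1) / 2 := by
    rw [show 6 * α - 2 = (3 * α - 1) * 2 by ring, ← div_div, eq_sub_iff_add_eq, ← add_div,
      ← add_div, div_div, div_eq_one_iff_eq (mul_ne_zero h3 two_ne_zero)]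
    ring
  linarith [interpWeight_le_div h₁ h₂]

end interpWeight

/-- For `1 ≤ S ≤ N` and `1/2 < α < 1`, with `θ = (1−α)²(1+3α)/((1+α²)(3α−1))`,
`T₁₂ = S^{1/2} N^{(3−α)/(1+3α)}`, `T₂₁ = S·N^{(1−α)/(1+α)}`,
`T₂₂ = S^{(7α−3)/(6α−2)} N^{(1−α)/(3α−1)}`, one has
`T₂₂ ≤ T₁₂^θ · T₂₁^{1−θ} ≤ max{T₁₂, T₂₁}`. -/
theorem T22_le_max (S N α θ T₁₂ T₂₁ T₂₂ : ℝ)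
    (hS : 1 ≤ S) (hSN : S ≤ N)
    (h1 : 1 / 2 < α) (h2 : α < 1)
    (hθ : θ = (1 - α) ^ 2 * (1 + 3 * α) / ((1 + α ^ 2) * (3 * α - 1)))
    (h12 : T₁₂ = S ^ ((1 : ℝ) / 2) * N ^ ((3 - α) / (1 + 3 * α)))
    (h21 : T₂₁ = S * N ^ ((1 - α) / (1 + α)))
    (h22 : T₂₂ = S ^ ((7 * α - 3) / (6 * α - 2)) * N ^ ((1 - α) / (3 * α - 1))) :
    T₂₂ ≤ T₁₂ ^ θ * T₂₁ ^ (1 - θ) ∧ T₁₂ ^ θ * T₂₁ ^ (1 - θ) ≤ max T₁₂ T₂₁ := by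
  obtain rfl : θ = interpWeight α := hθ
  have hS₀ : 0 < S := by linarith
  have hN₀ : 0 < N := by linarith
  have h21' : T₂₁ = S ^ (1 : ℝ) * N ^ ((1 - α) / (1 + α)) := by rw [h21, rpow_one]
  refine ⟨?_, ?_⟩
  · rw [h22, h12, h21', rpow_mul_rpow_interpolate hS₀ hN₀, exponent_N_interpolate h1]
    gcongr
    exact exponent_S_le_interpolate h1 h2
  · exact rpow_mul_rpow_one_sub_le_max (by rw [h12]; positivity) (by rw [h21]; positivity)
      (interpWeight_nonneg h1) (interpWeight_le_one h1 h2)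
end
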